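/- arXiv:1703.02951 — 3 statements merged into one kernel-verified Lean document; each statement's English description precedes it below -/
import Mathlib

section
/- Let T be a commutative ring, m a maximal ideal of T, and M a finitely generated T-module. If dim_{T/m}(M/mM) ≤ 1, M is torsion-free over ℤ with T torsion-free over ℤ, and M⊗ℚ is free of rank 1 over T⊗ℚ locally at m, then the m-adic localization M_m is free of rank 1 over T_m whenever M_m ≠ 0. -/
open TensorProduct

private lemma tmul_one_eq_zero {N : Type*} [AddCommGroup N] [NoZeroSMulDivisors ℤ N] (r : N)
    (h : (1 : ℚ) ⊗ₜ[ℤ] r = 0) : r = 0 := by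
  haveI : IsLocalizedModule (nonZeroDivisors ℤ) (TensorProduct.mk ℤ ℚ N 1) :=
    (isLocalizedModule_iff_isBaseChange (nonZeroDivisors ℤ) ℚ _).mpr
      (TensorProduct.isBaseChange ℤ N ℚ)
  obtain ⟨s, hs⟩ := (IsLocalizedModule.eq_zero_iff (nonZeroDivisors ℤ)
    (TensorProduct.mk ℤ ℚ N 1)).mp h
  have hs' : (s : ℤ) • r = 0 := hs
  rcases smul_eq_zero.mp hs' with h' | h'
  · exact absurd h' (nonZeroDivisors.coe_ne_zero s)
  · exact h'

private lemma loc_noZeroSMulDivisors (T : Type*) [CommRing T] [NoZeroSMulDivisors ℤ T]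
    (m : Ideal T) [m.IsMaximal] :
    NoZeroSMulDivisors ℤ (Localization.AtPrime m) := by
  constructor
  intro n r h
  by_cases hn : n = 0
  · exact Or.inl hn
  right
  obtain ⟨⟨t, s⟩, hts⟩ := IsLocalization.surj m.primeCompl r
  have h0 : algebraMap T (Localization.AtPrime m) (n • t) = 0 := by
    rw [map_zsmul, ← hts, ← smul_mul_assoc, h, zero_mul]
  obtain ⟨c, hc⟩ := (IsLocalization.map_eq_zero_iff m.primeCompl _ _).mp h0
  rw [mul_smul_comm] at hc
  have hct : (c : T) * t = 0 := by
    rcases smul_eq_zero.mp hc with h' | h'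
    · exact absurd h' hn
    · exact h'
  have ht0 : algebraMap T (Localization.AtPrime m) t = 0 :=
    (IsLocalization.map_eq_zero_iff m.primeCompl _ _).mpr ⟨c, hct⟩
  have := hts
  rw [ht0] at this
  exact ((IsLocalization.map_units (Localization.AtPrime m) s).mul_left_eq_zero).mp this

/-- Let `T` be a commutative ring (finite free as a `ℤ`-module), `m` a maximal
ideal of `T`, and `M` a finitely generated `T`-module, with `T` and `M` torsion-free over `ℤ`.
If `dim_{T/m}(M/mM) ≤ 1` and the localization `M_m ⊗ ℚ` is a free `T_m ⊗ ℚ`-module of rank `1`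
(encoded: there is a `T_m`-linear map `T_m → M_m` that becomes bijective after `⊗ℚ`), then the
localization `M_m`, whenever nonzero, is free of rank `1` over `T_m` (encoded: there is a
bijective `T_m`-linear map `T_m → M_m`). -/
theorem statement1
    (T : Type*) [CommRing T] [Module.Free ℤ T] [Module.Finite ℤ T] [NoZeroSMulDivisors ℤ T]
    (m : Ideal T) [m.IsMaximal]
    (M : Type*) [AddCommGroup M] [Module T M] [Module.Finite T M] [NoZeroSMulDivisors ℤ M]
    (hdim : Module.rank (T ⧸ m) (M ⧸ (m • ⊤ : Submodule T M)) ≤ 1)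
    (hratfree : ∃ f : Localization.AtPrime m →ₗ[Localization.AtPrime m]
        LocalizedModule m.primeCompl M,
      Function.Bijective ((f.restrictScalars ℤ).baseChange ℚ))
    (hne : Nontrivial (LocalizedModule m.primeCompl M)) :
    ∃ g : Localization.AtPrime m →ₗ[Localization.AtPrime m] LocalizedModule m.primeCompl M,
      Function.Bijective g := by
  classical
  obtain ⟨f, hf⟩ := hratfree
  -- Step 1: a single generator of `M ⧸ m•⊤` lifts to `x : M` with `M = span{x} + m•M`.
  have hgen : ∃ x : M, ∀ w : M, w ∈ Submodule.span T {x} ⊔ (m • ⊤ : Submodule T M) := by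
    letI : Field (T ⧸ m) := Ideal.Quotient.field m
    letI inst : Module (T ⧸ m) (M ⧸ (m • ⊤ : Submodule T M)) := inferInstanceAs
      (Module (T ⧸ m) (M ⧸ (m • ⊤ : Submodule T M)))
    obtain ⟨v₀, hv₀⟩ := rank_le_one_iff.mp hdim
    obtain ⟨x, rfl⟩ := Submodule.Quotient.mk_surjective (m • ⊤ : Submodule T M) v₀
    refine ⟨x, fun w => ?_⟩
    obtain ⟨c, hc⟩ := hv₀ (Submodule.Quotient.mk w)
    obtain ⟨t, rfl⟩ := Ideal.Quotient.mk_surjective c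
    rw [Module.Quotient.mk_smul_mk] at hc
    have hmem : t • x - w ∈ (m • ⊤ : Submodule T M) := (Submodule.Quotient.eq _).mp hc
    refine Submodule.mem_sup.mpr ⟨t • x, Submodule.mem_span_singleton.mpr ⟨t, rfl⟩,
      -(t • x - w), neg_mem hmem, by abel⟩
  obtain ⟨x, hsup⟩ := hgen
  -- notation
  set x' : LocalizedModule m.primeCompl M := LocalizedModule.mkLinearMap m.primeCompl M x with hx'
  set N : Submodule (Localization.AtPrime m) (LocalizedModule m.primeCompl M) :=
    Submodule.span (Localization.AtPrime m) {x'} with hN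
  set m' : Ideal (Localization.AtPrime m) :=
    m.map (algebraMap T (Localization.AtPrime m)) with hm'
  -- Step 2: `span{x'} + m'•⊤ = ⊤` in the localized module.
  have hmem1 : ∀ w : M, LocalizedModule.mkLinearMap m.primeCompl M w ∈ N ⊔ m' • ⊤ := by
    intro w
    obtain ⟨p, hp, q, hq, rfl⟩ := Submodule.mem_sup.mp (hsup w)
    rw [map_add]
    refine add_mem (Submodule.mem_sup_left ?_) (Submodule.mem_sup_right ?_)
    · obtain ⟨t, rfl⟩ := Submodule.mem_span_singleton.mp hp
      rw [map_smul, ← algebraMap_smul (Localization.AtPrime m) t]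
      exact Submodule.smul_mem _ _ (Submodule.mem_span_singleton_self _)
    · refine Submodule.smul_induction_on hq ?_ ?_
      · intro a ha n _
        rw [map_smul, ← algebraMap_smul (Localization.AtPrime m) a]
        exact Submodule.smul_mem_smul (Ideal.mem_map_of_mem _ ha) trivial
      · intro z1 z2 h1 h2
        rw [map_add]; exact add_mem h1 h2
  have htop : (⊤ : Submodule (Localization.AtPrime m) (LocalizedModule m.primeCompl M)) ≤
      N ⊔ m' • ⊤ := by
    intro z _
    induction z using LocalizedModule.induction_on with
    | h w s =>
      have hz : LocalizedModule.mk w s = Localization.mk 1 s • LocalizedModule.mk w 1 := by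
        rw [LocalizedModule.mk_smul_mk, one_smul, mul_one]
      rw [hz]
      exact Submodule.smul_mem _ _ (by simpa using hmem1 w)
  -- Step 3: Nakayama over the local ring `T_m`.
  haveI : Module.Finite (Localization.AtPrime m) (LocalizedModule m.primeCompl M) :=
    Module.Finite.of_isLocalizedModule m.primeCompl (LocalizedModule.mkLinearMap m.primeCompl M)
  have hjac : m' ≤ Ideal.jacobson ⊥ := by
    rw [hm', Localization.AtPrime.map_eq_maximalIdeal]
    exact IsLocalRing.maximalIdeal_le_jacobson ⊥
  have hNtop : N = ⊤ :=
    eq_top_iff.mpr (Submodule.le_of_le_smul_of_le_jacobson_bot Module.Finite.fg_top hjac htop)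
  -- Step 4: the map `r ↦ r • x'` is bijective.
  haveI := loc_noZeroSMulDivisors T m
  have hy : f 1 ∈ N := hNtop ▸ Submodule.mem_top
  obtain ⟨b, hb⟩ := Submodule.mem_span_singleton.mp hy
  have hker : ∀ r : Localization.AtPrime m, r • x' = 0 → r = 0 := by
    intro r hr
    have hfr : f r = 0 := by
      have h1 : f r = r • f 1 := by rw [← map_smul, smul_eq_mul, mul_one]
      rw [h1, ← hb, ← mul_smul, mul_comm, mul_smul, hr, smul_zero]
    have h0 : ((f.restrictScalars ℤ).baseChange ℚ) ((1 : ℚ) ⊗ₜ[ℤ] r) = 0 := by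
      rw [LinearMap.baseChange_tmul]
      simp [hfr]
    have h1 : (1 : ℚ) ⊗ₜ[ℤ] r = 0 := hf.injective (h0.trans (map_zero _).symm)
    exact tmul_one_eq_zero r h1
  refine ⟨LinearMap.toSpanSingleton _ _ x', ?_, ?_⟩
  · intro a b hab
    have : (a - b) • x' = 0 := by
      rw [sub_smul, sub_eq_zero]
      simpa [LinearMap.toSpanSingleton_apply] using hab
    exact sub_eq_zero.mp (hker _ this)
  · intro z
    have hz : z ∈ N := hNtop ▸ Submodule.mem_top
    obtain ⟨r, hr⟩ := Submodule.mem_span_singleton.mp hz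
    exact ⟨r, by simpa [LinearMap.toSpanSingleton_apply] using hr⟩
end

section
/- Let T_m be a complete local commutative ring, finite free over ℤ_p, and let H be a T_m-module, finite free over ℤ_p, such that H ⊗ ℚ_p is free of rank r over T_m ⊗ ℚ_p and H/mH has dimension at most r over T_m/m. Then H is free of rank r as a T_m-module. -/
open TensorProduct

/-!
By Nakayama's lemma, `r` lifts of a spanning family of `H/mH` give a surjection `ψ : T_m^r → H`.
After `⊗ ℚ_p` it is a surjection between `ℚ_p`-spaces of the same finite dimension, hence
injective; since `T_m^r` is flat over `ℤ_p` and `ℤ_p → ℚ_p` is injective, `ψ` itself is injective.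
-/

theorem Module.exists_span_eq_top_of_rank_le {K V : Type*} [DivisionRing K] [AddCommGroup V]
    [Module K V] {r : ℕ} (h : Module.rank K V ≤ r) :
    ∃ v : Fin r → V, Submodule.span K (Set.range v) = ⊤ := by
  have : Module.Finite K V :=
    Module.rank_lt_aleph0_iff.mp (h.trans_lt Cardinal.natCast_lt_aleph0)
  have hn : Module.finrank K V ≤ r := Module.finrank_le_of_rank_le h
  let b := Module.finBasis K V
  refine ⟨Function.extend (Fin.castLE hn) b 0, eq_top_iff.2 ?_⟩
  rw [← b.span_eq]
  refine Submodule.span_mono ?_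
  rintro _ ⟨i, rfl⟩
  exact ⟨Fin.castLE hn i, (Fin.castLE_injective hn).extend_apply _ _ _⟩

namespace IsLocalRing

variable {R M : Type*} [CommRing R] [IsLocalRing R] [AddCommGroup M] [Module R M]
  [Module.Finite R M]

theorem exists_surjective_of_rank_quotient_le {r : ℕ}
    (h : Module.rank (R ⧸ maximalIdeal R) (M ⧸ (maximalIdeal R • ⊤ : Submodule R M)) ≤ r) :
    ∃ ψ : (Fin r → R) →ₗ[R] M, Function.Surjective ψ := by
  let := Ideal.Quotient.field (maximalIdeal R)
  obtain ⟨v, hv⟩ := Module.exists_span_eq_top_of_rank_le h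
  choose f hf using fun i ↦ Submodule.mkQ_surjective (maximalIdeal R • ⊤ : Submodule R M) (v i)
  have hspan : Submodule.span R (Set.range f) = ⊤ := by
    rw [← map_mkQ_eq_top, Submodule.map_span, ← Set.range_comp, show _ ∘ f = v from funext hf,
      ← Submodule.restrictScalars_span R _ (Ideal.Quotient.mk_surjective (I := maximalIdeal R)),
      hv, Submodule.restrictScalars_top]
  refine ⟨Fintype.linearCombination R f, ?_⟩
  rw [← LinearMap.range_eq_top, Fintype.range_linearCombination, hspan]

end IsLocalRing

theorem LinearMap.injective_of_baseChange_injective {R S M N : Type*} [CommSemiring R]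
    [Semiring S] [Algebra R S] [FaithfulSMul R S] [AddCommMonoid M] [Module R M] [Module.Flat R M]
    [AddCommMonoid N] [Module R N] {f : M →ₗ[R] N} (hf : Function.Injective (f.baseChange S)) :
    Function.Injective f := fun x y hxy ↦
  Module.Flat.tensorProduct_mk_injective R M S <| hf <| by simp [hxy]

theorem statement8_general
    (p : ℕ) [Fact p.Prime]
    (Tm : Type*) [CommRing Tm] [IsLocalRing Tm] [Algebra ℤ_[p] Tm]
    [Module.Free ℤ_[p] Tm] [Module.Finite ℤ_[p] Tm]
    (H : Type*) [AddCommGroup H] [Module Tm H] [Module ℤ_[p] H] [IsScalarTower ℤ_[p] Tm H]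
    [Module.Finite ℤ_[p] H]
    (r : ℕ)
    (hrat : ∃ φ : (Fin r → Tm) →ₗ[Tm] H,
      Function.Bijective ((φ.restrictScalars ℤ_[p]).baseChange ℚ_[p]))
    (hdim : Module.rank (Tm ⧸ IsLocalRing.maximalIdeal Tm)
      (H ⧸ ((IsLocalRing.maximalIdeal Tm) • ⊤ : Submodule Tm H)) ≤ r) :
    ∃ ψ : (Fin r → Tm) →ₗ[Tm] H, Function.Bijective ψ := by
  obtain ⟨φ, hφ⟩ := hrat
  have : Module.Finite Tm H := .of_restrictScalars_finite ℤ_[p] Tm H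
  obtain ⟨ψ, hψ⟩ := IsLocalRing.exists_surjective_of_rank_quotient_le hdim
  have hsurj : Function.Surjective ((ψ.restrictScalars ℤ_[p]).baseChange ℚ_[p]) :=
    LinearMap.baseChange_surjective ℚ_[p] hψ
  have hinj : Function.Injective ((ψ.restrictScalars ℤ_[p]).baseChange ℚ_[p]) :=
    (LinearMap.injective_iff_surjective_of_finrank_eq_finrank
      (LinearEquiv.ofBijective _ hφ).finrank_eq).mpr hsurj
  exact ⟨ψ, LinearMap.injective_of_baseChange_injective
    (f := ψ.restrictScalars ℤ_[p]) hinj, hψ⟩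

/-- Let `T_m` be a (complete) local commutative ring, finite free over `ℤ_p`,
with maximal ideal `m`, and let `H` be a `T_m`-module, finite free over `ℤ_p`, such that
`H ⊗ ℚ_p` is free of rank `r` over `T_m ⊗ ℚ_p` (encoded: a `T_m`-linear map `T_m^r → H`
becoming bijective after `⊗ ℚ_p`) and `dim_{T_m/m}(H/mH) ≤ r`.  Then `H` is free of rank `r`
as a `T_m`-module (encoded: there is a bijective `T_m`-linear map `T_m^r → H`). -/
theorem statement8
    (p : ℕ) [Fact p.Prime]
    (Tm : Type*) [CommRing Tm] [IsLocalRing Tm] [Algebra ℤ_[p] Tm]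
    [Module.Free ℤ_[p] Tm] [Module.Finite ℤ_[p] Tm]
    (H : Type*) [AddCommGroup H] [Module Tm H] [Module ℤ_[p] H] [IsScalarTower ℤ_[p] Tm H]
    [Module.Free ℤ_[p] H] [Module.Finite ℤ_[p] H]
    (r : ℕ)
    (hrat : ∃ φ : (Fin r → Tm) →ₗ[Tm] H,
      Function.Bijective ((φ.restrictScalars ℤ_[p]).baseChange ℚ_[p]))
    (hdim : Module.rank (Tm ⧸ IsLocalRing.maximalIdeal Tm)
      (H ⧸ ((IsLocalRing.maximalIdeal Tm) • ⊤ : Submodule Tm H)) ≤ r) :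
    ∃ ψ : (Fin r → Tm) →ₗ[Tm] H, Function.Bijective ψ :=
  statement8_general p Tm H r hrat hdim
end

section
/- Let T_m be a local commutative ring finite free over ℤ_p with maximal ideal m. If there exists a T_m-module isomorphism T_m^{⊕2} ≅ (Hom_{ℤ_p}(T_m, ℤ_p))^{⊕2}, then T_m ≅ Hom_{ℤ_p}(T_m, ℤ_p) as T_m-modules (i.e., T_m is Gorenstein). -/
/-!
A finitely generated projective module over a local ring is free, and `D` is one: it is a direct
summand of `D ^ 2 ≅ Tm ^ 2`. Comparing ranks in `Tm ^ 2 ≅ D ^ 2` then forces `D` to have rank one.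
-/

namespace Module

variable {R M ι : Type*} [CommRing R] [AddCommGroup M] [Module R M] [Finite ι]

theorem Finite.of_linearEquiv_pi (i : ι) (e : (ι → R) ≃ₗ[R] (ι → M)) : Module.Finite R M :=
  Module.Finite.of_surjective (LinearMap.proj i ∘ₗ e.toLinearMap) fun m =>
    ⟨e.symm fun _ => m, by simp⟩

theorem Projective.of_linearEquiv_pi (i : ι) (e : (ι → R) ≃ₗ[R] (ι → M)) :
    Module.Projective R M := by
  classical
  exact .of_split (e.symm.toLinearMap ∘ₗ LinearMap.single R (fun _ => M) i)
    (LinearMap.proj i ∘ₗ e.toLinearMap) (by ext; simp)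

theorem Free.of_linearEquiv_pi_of_isLocalRing [IsLocalRing R] (i : ι)
    (e : (ι → R) ≃ₗ[R] (ι → M)) : Module.Free R M :=
  have := Module.Finite.of_linearEquiv_pi i e
  have := Module.Projective.of_linearEquiv_pi i e
  have := Module.finitePresentation_of_projective R M
  free_of_flat_of_isLocalRing

theorem finrank_eq_one_of_linearEquiv_pi [Nontrivial R] [Module.Free R M] [Module.Finite R M]
    [Nonempty ι] (e : (ι → R) ≃ₗ[R] (ι → M)) : finrank R M = 1 := by
  have := Fintype.ofFinite ι
  have hrank : Fintype.card ι * 1 = Fintype.card ι * finrank R M := by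
    simpa [finrank_pi, finrank_pi_fintype] using e.finrank_eq
  exact (Nat.eq_of_mul_eq_mul_left Fintype.card_pos hrank).symm

theorem nonempty_linearEquiv_of_linearEquiv_pi_of_isLocalRing [IsLocalRing R] [Nonempty ι]
    (e : (ι → R) ≃ₗ[R] (ι → M)) : Nonempty (R ≃ₗ[R] M) :=
  have i : ι := Classical.arbitrary ι
  have := Module.Finite.of_linearEquiv_pi i e
  have := Module.Free.of_linearEquiv_pi_of_isLocalRing i e
  nonempty_linearEquiv_of_finrank_eq_one (finrank_eq_one_of_linearEquiv_pi e)

end Module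

theorem statement10_general
    (Tm : Type*) [CommRing Tm] [IsLocalRing Tm]
    (D : Type*) [AddCommGroup D] [Module Tm D]
    (h2 : Nonempty ((Fin 2 → Tm) ≃ₗ[Tm] (Fin 2 → D))) :
    Nonempty (Tm ≃ₗ[Tm] D) :=
  let ⟨e⟩ := h2
  Module.nonempty_linearEquiv_of_linearEquiv_pi_of_isLocalRing e

/-- Let `T_m` be a local commutative ring finite free over `ℤ_p` with maximal
ideal `m`, and let `D = Hom_{ℤ_p}(T_m, ℤ_p)` be the `ℤ_p`-linear dual with its natural
`T_m`-module structure (encoded: a `T_m`-module `D` with a perfect `ℤ_p`-bilinear pairing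
`B : D × T_m → ℤ_p` satisfying `B(t•d, x) = B(d, t*x)`).  If `T_m^{⊕2} ≅ D^{⊕2}` as
`T_m`-modules, then `T_m ≅ D` as `T_m`-modules, i.e. `T_m` is Gorenstein. -/
theorem statement10
    (p : ℕ) [Fact p.Prime]
    (Tm : Type*) [CommRing Tm] [IsLocalRing Tm] [Algebra ℤ_[p] Tm]
    [Module.Free ℤ_[p] Tm] [Module.Finite ℤ_[p] Tm]
    (D : Type*) [AddCommGroup D] [Module Tm D] [Module ℤ_[p] D] [IsScalarTower ℤ_[p] Tm D]
    (B : D →ₗ[ℤ_[p]] Tm →ₗ[ℤ_[p]] ℤ_[p])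
    (hBperfect : Function.Bijective B)
    (hBcompat : ∀ (t : Tm) (d : D) (x : Tm), B (t • d) x = B d (t * x))
    (h2 : Nonempty ((Fin 2 → Tm) ≃ₗ[Tm] (Fin 2 → D))) :
    Nonempty (Tm ≃ₗ[Tm] D) :=
  statement10_general Tm D h2
end
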